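/- arXiv:1003.0564 — 2 statements merged into one kernel-verified Lean document; each statement's English description precedes it below -/
import Mathlib

section
/- Let A be an n×n generalized Cartan matrix. Then A is symmetrizable if and only if every cycle in the Dynkin diagram graph of A is balanced, i.e., for every sequence of distinct vertices i_1, …, i_k (k ≥ 3) with i_s adjacent to i_{s+1} for 1 ≤ s < k and i_k adjacent to i_1, the product over s (mod k) of the ratios A(i_{s+1}, i_s) / A(i_s, i_{s+1}) equals 1. -/
/-!
Give each oriented edge `u → v` of the Dynkin diagram the weight `A v u / A u v`; reversing an
edge inverts its weight. A symmetrization `d` is the same thing as a potential for these weights,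
`d u = (A v u / A u v) * d v`, so around any cycle the weights telescope to `1`. Conversely, if
every cycle is balanced then every closed walk has weight `1`: a closed walk that is not a cycle
either runs out and back along one edge or splits at a repeated vertex into two shorter closed
walks. Hence the weight of a walk from `v` to a fixed base point of its connected component does
not depend on the walk, and it is a symmetrization.
-/

/-- An integer matrix is a generalized Cartan matrix (GCM). -/
def IsGCM {ι : Type} (A : Matrix ι ι ℤ) : Prop :=
  (∀ i, A i i = 2) ∧ (∀ i j, i ≠ j → A i j ≤ 0) ∧ (∀ i j, A i j = 0 → A j i = 0)

/-- A GCM is symmetrizable if there are nonzero rationals `d i` with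
`d i * A i j = d j * A j i` for all `i, j`. -/
def IsSymmetrizable {ι : Type} (A : Matrix ι ι ℤ) : Prop :=
  ∃ d : ι → ℚ, (∀ i, d i ≠ 0) ∧ ∀ i j, d i * (A i j : ℚ) = d j * (A j i : ℚ)

/-- The Dynkin diagram graph of a GCM: `i` adjacent to `j` iff `i ≠ j` and `A i j ≠ 0`.
(For a GCM, `A i j ≠ 0 ↔ A j i ≠ 0`, so adjacency is stated symmetrically.) -/
def dynkinGraph {ι : Type} (A : Matrix ι ι ℤ) : SimpleGraph ι where
  Adj i j := i ≠ j ∧ A i j ≠ 0 ∧ A j i ≠ 0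
  symm := ⟨by intro i j h; exact ⟨h.1.symm, h.2.2, h.2.1⟩⟩
  loopless := ⟨by intro i h; exact h.1 rfl⟩

namespace SimpleGraph

variable {V M : Type*} {G : SimpleGraph V} [CommMonoid M]

def Walk.weight (w : V → V → M) {u v : V} (p : G.Walk u v) : M :=
  (p.darts.map fun d => w d.fst d.snd).prod

variable {w : V → V → M} (hw : ∀ ⦃u v⦄, G.Adj u v → w u v * w v u = 1)

namespace Walk

variable {u v x : V}

@[simp]
lemma weight_nil : (nil : G.Walk u u).weight w = 1 := rfl

@[simp]
lemma weight_cons (h : G.Adj u v) (p : G.Walk v x) :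
    (cons h p).weight w = w u v * p.weight w := by
  simp [weight]

@[simp]
lemma weight_append (p : G.Walk u v) (q : G.Walk v x) :
    (p.append q).weight w = p.weight w * q.weight w := by
  simp [weight, darts_append]

@[simp]
lemma weight_copy {u' v' : V} (p : G.Walk u v) (hu : u = u') (hv : v = v') :
    (p.copy hu hv).weight w = p.weight w := by
  simp [weight]

lemma weight_eq_prod_range (p : G.Walk u v) :
    p.weight w = ∏ s ∈ Finset.range p.length, w (p.getVert s) (p.getVert (s + 1)) := by
  induction p with
  | nil => simp
  | cons h q ih =>
    rw [weight_cons, ih, length_cons, Finset.prod_range_succ', mul_comm]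
    simp

include hw in
lemma weight_reverse_mul_weight (p : G.Walk u v) : p.reverse.weight w * p.weight w = 1 := by
  induction p with
  | nil => simp
  | @cons a b c h q ih =>
    calc (cons h q).reverse.weight w * (cons h q).weight w
        = (w b a * w a b) * (q.reverse.weight w * q.weight w) := by
          simp only [reverse_cons, weight_append, weight_cons, weight_nil, mul_one]; ac_rfl
      _ = 1 := by rw [ih, hw h.symm, one_mul]

include hw in
lemma isUnit_weight (p : G.Walk u v) : IsUnit (p.weight w) :=
  .of_mul_eq_one _ <| by rw [mul_comm]; exact weight_reverse_mul_weight hw p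

lemma exists_eq_append_of_not_isPath {p : G.Walk u v} (hp : ¬p.IsPath) :
    ∃ (x : V) (a : G.Walk u x) (c : G.Walk x x) (b : G.Walk x v),
      0 < c.length ∧ p = a.append (c.append b) := by
  classical
  induction p with
  | nil => exact absurd .nil hp
  | @cons u y v h q ih =>
    by_cases hq : q.IsPath
    · have hu : u ∈ q.support := by simpa [cons_isPath_iff, hq] using hp
      exact ⟨u, nil, cons h (q.takeUntil u hu), q.dropUntil u hu, by simp, by simp [q.take_spec hu]⟩
    · obtain ⟨x, a, c, b, hc, rfl⟩ := ih hq
      exact ⟨x, cons h a, c, b, hc, rfl⟩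

include hw in
theorem weight_eq_one_of_forall_isCycle
    (hcyc : ∀ u (c : G.Walk u u), c.IsCycle → c.weight w = 1) (p : G.Walk u u) :
    p.weight w = 1 := by
  induction hn : p.length using Nat.strong_induction_on generalizing u with
  | _ n ih =>
  cases p with
  | nil => rfl
  | @cons _ v _ h q =>
    by_cases hq : q.IsPath
    · by_cases he : s(u, v) ∈ q.edges
      · -- a path from `v` to `u` that uses the edge `uv` is that single edge
        rw [hq.eq_adj_toWalk_of_mem_edges (Sym2.eq_swap ▸ he)]
        simpa using hw h
      · exact hcyc _ _ ((cons_isCycle_iff q h).mpr ⟨hq, he⟩)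
    · obtain ⟨x, a, c, b, hc, rfl⟩ := exists_eq_append_of_not_isPath hq
      simp only [length_cons, length_append] at hn
      have hacb := ih (a.length + b.length + 1) (by omega) (cons h (a.append b)) (by simp)
      have hc := ih c.length (by omega) c rfl
      simp only [weight_cons, weight_append] at hacb ⊢
      rwa [hc, one_mul]

include hw in
lemma weight_eq_of_forall_closed (hclosed : ∀ u (c : G.Walk u u), c.weight w = 1)
    (p q : G.Walk u v) : p.weight w = q.weight w :=
  calc p.weight w = p.weight w * (q.reverse.weight w * q.weight w) := by
        rw [weight_reverse_mul_weight hw, mul_one]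
    _ = q.weight w := by rw [← mul_assoc, ← weight_append, hclosed, one_mul]

end Walk

include hw in
theorem exists_potential_of_forall_closed (hclosed : ∀ u (c : G.Walk u u), c.weight w = 1) :
    ∃ d : V → M, (∀ v, IsUnit (d v)) ∧ ∀ ⦃u v⦄, G.Adj u v → d u = w u v * d v := by
  let r : V → V := fun v => (G.connectedComponentMk v).out
  have hr : ∀ v, G.Reachable v (r v) := fun v => ConnectedComponent.exact (Quot.out_eq _).symm
  refine ⟨fun v => (hr v).some.weight w, fun v => Walk.isUnit_weight hw _, fun u v h => ?_⟩
  have e : r v = r u := by simp only [r, ConnectedComponent.sound h.reachable]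
  calc (hr u).some.weight w = ((Walk.cons h (hr v).some).copy rfl e).weight w :=
        Walk.weight_eq_of_forall_closed hw hclosed _ _
    _ = w u v * (hr v).some.weight w := by simp

lemma prod_eq_one_of_potential {d : V → M} (hd : ∀ v, IsUnit (d v))
    (hdw : ∀ ⦃u v⦄, G.Adj u v → d u = w u v * d v) {k : ℕ} [NeZero k] (i : Fin k → V)
    (hi : ∀ s, G.Adj (i s) (i (s + 1))) : ∏ s, w (i s) (i (s + 1)) = 1 := by
  have hshift : ∏ s, d (i (s + 1)) = ∏ s, d (i s) :=
    Fintype.prod_equiv (Equiv.addRight 1) _ _ fun _ => rfl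
  refine (IsUnit.mul_eq_right (IsUnit.prod_iff (s := .univ).mpr fun s _ => hd (i s))).mp ?_
  calc (∏ s, w (i s) (i (s + 1))) * ∏ s, d (i s) = ∏ s, w (i s) (i (s + 1)) * d (i (s + 1)) := by
        rw [← hshift, Finset.prod_mul_distrib]
    _ = ∏ s, d (i s) := Finset.prod_congr rfl fun s _ => (hdw (hi s)).symm

lemma Walk.IsCycle.weight_eq_one
    (hbal : ∀ (m : ℕ) (i : Fin (m + 3) → V), Function.Injective i →
      (∀ s, G.Adj (i s) (i (s + 1))) → ∏ s, w (i s) (i (s + 1)) = 1)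
    {u : V} {c : G.Walk u u} (hc : c.IsCycle) : c.weight w = 1 := by
  obtain ⟨m, hm⟩ : ∃ m, c.length = m + 3 := ⟨c.length - 3, by have := hc.three_le_length; omega⟩
  let i : Fin (m + 3) → V := fun s => c.getVert s
  have hi_succ : ∀ s : Fin (m + 3), i (s + 1) = c.getVert (s + 1) := by
    intro s
    simp only [i, Fin.val_add_one]
    split_ifs with hs
    · rw [hs, Fin.val_last, Walk.getVert_zero, ← hm, Walk.getVert_length]
    · rfl
  have hinj : Function.Injective i := fun s t hst =>
    Fin.ext <| hc.getVert_injOn' (by simp; omega) (by simp; omega) hst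
  have hadj : ∀ s, G.Adj (i s) (i (s + 1)) := fun s =>
    hi_succ s ▸ c.adj_getVert_succ (by omega)
  rw [Walk.weight_eq_prod_range, hm,
    ← Fin.prod_univ_eq_prod_range (fun s => w (c.getVert s) (c.getVert (s + 1)))]
  simpa only [hi_succ] using hbal m i hinj hadj

end SimpleGraph

open SimpleGraph

def cartanRatio {ι : Type} (A : Matrix ι ι ℤ) (u v : ι) : ℚ := (A v u : ℚ) / A u v

lemma cartanRatio_mul_cartanRatio {ι : Type} {A : Matrix ι ι ℤ} {u v : ι}
    (h : (dynkinGraph A).Adj u v) : cartanRatio A u v * cartanRatio A v u = 1 := by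
  have huv : (A u v : ℚ) ≠ 0 := by exact_mod_cast h.2.1
  have hvu : (A v u : ℚ) ≠ 0 := by exact_mod_cast h.2.2
  rw [cartanRatio, cartanRatio, div_mul_div_comm, mul_comm, div_self (mul_ne_zero huv hvu)]

lemma isSymmetrizable_iff_exists_potential {ι : Type} {A : Matrix ι ι ℤ}
    (hA : ∀ i j, A i j = 0 → A j i = 0) :
    IsSymmetrizable A ↔ ∃ d : ι → ℚ, (∀ v, IsUnit (d v)) ∧
      ∀ ⦃u v⦄, (dynkinGraph A).Adj u v → d u = cartanRatio A u v * d v := by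
  constructor
  · rintro ⟨d, hd, hdA⟩
    refine ⟨d, fun v => (hd v).isUnit, fun u v h => ?_⟩
    have huv : (A u v : ℚ) ≠ 0 := by exact_mod_cast h.2.1
    rw [cartanRatio, div_mul_eq_mul_div, eq_div_iff huv, hdA, mul_comm]
  · rintro ⟨d, hd, hdw⟩
    refine ⟨d, fun v => (hd v).ne_zero, fun u v => ?_⟩
    by_cases huv : u = v
    · rw [huv]
    by_cases h0 : A u v = 0
    · simp [h0, hA u v h0]
    have h : (dynkinGraph A).Adj u v := ⟨huv, h0, fun h' => h0 (hA v u h')⟩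
    have huv' : (A u v : ℚ) ≠ 0 := by exact_mod_cast h0
    rw [hdw h, cartanRatio]
    field_simp

/-- A GCM is symmetrizable iff every cycle in its Dynkin diagram graph is balanced:
for every sequence of distinct vertices `i 1, …, i k` (`k = m + 3 ≥ 3`) with consecutive
vertices adjacent (cyclically), the product of the multiplicities
`A (i (s+1)) (i s) / A (i s) (i (s+1))` is `1`. -/
theorem symmetrizable_iff_cycles_balanced {n : ℕ} (A : Matrix (Fin n) (Fin n) ℤ)
    (hA : IsGCM A) :
    IsSymmetrizable A ↔
      ∀ (m : ℕ) (i : Fin (m + 3) → Fin n), Function.Injective i →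
        (∀ s, (dynkinGraph A).Adj (i s) (i (s + 1))) →
        (∏ s, ((A (i (s + 1)) (i s) : ℚ) / (A (i s) (i (s + 1)) : ℚ))) = 1 := by
  have hw : ∀ ⦃u v⦄, (dynkinGraph A).Adj u v → cartanRatio A u v * cartanRatio A v u = 1 :=
    fun _ _ => cartanRatio_mul_cartanRatio
  rw [isSymmetrizable_iff_exists_potential hA.2.2]
  constructor
  · rintro ⟨d, hd, hdw⟩ m i - hi
    exact prod_eq_one_of_potential hd hdw i hi
  · intro hbal
    exact exists_potential_of_forall_closed hw fun _ c =>
      c.weight_eq_one_of_forall_isCycle hw fun _ _ hc => hc.weight_eq_one hbal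
end

section
/- Let A be an n×n symmetrizable generalized Cartan matrix with Weyl group W acting on ℚ^n, and let J_1, …, J_t be the vertex sets of the connected components of the simply laced skeleton of A. For each s, let Φ_{J_s} = ⋃_{j ∈ J_s} W·e_j. Then the sets Φ_{J_1}, …, Φ_{J_t} are pairwise disjoint and their union is the set Φ = ⋃_{i=1}^n W·e_i of all real roots. -/
/-- The Weyl group of an `n × n` GCM `A`: the subgroup of linear automorphisms of `ℚ^n`
generated by the simple reflections `s i`, where `s i (e j) = e j - A i j • e i`. -/
def weylGroup {n : ℕ} (A : Matrix (Fin n) (Fin n) ℤ) :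
    Subgroup ((Fin n → ℚ) ≃ₗ[ℚ] (Fin n → ℚ)) :=
  Subgroup.closure {w | ∃ i, ∀ j, w (Pi.single j 1) =
    (Pi.single j 1 : Fin n → ℚ) - (A i j : ℚ) • (Pi.single i 1 : Fin n → ℚ)}

/-- The orbit of the simple root `e i` under the Weyl group of `A`. -/
def weylOrbit {n : ℕ} (A : Matrix (Fin n) (Fin n) ℤ) (i : Fin n) : Set (Fin n → ℚ) :=
  {v | ∃ w ∈ weylGroup A, w (Pi.single i 1) = v}

/-- The simply laced skeleton of `A`: the simple graph with `i` adjacent to `j` iff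
`i ≠ j` and `A i j = -1 = A j i`. -/
def skeleton {n : ℕ} (A : Matrix (Fin n) (Fin n) ℤ) : SimpleGraph (Fin n) where
  Adj i j := i ≠ j ∧ A i j = -1 ∧ A j i = -1
  symm := by constructor; intro i j h; exact ⟨h.1.symm, h.2.2, h.2.1⟩
  loopless := by constructor; intro i h; exact h.1 rfl
/-! The Weyl group is the image of the Coxeter group with `m i j = 2, 3, 4, 6, ∞` according as
`A i j * A j i = 0, 1, 2, 3, ≥ 4`, and this reflection representation is faithful by Tits'
argument: `w` sends `e i` to a nonnegative vector unless `i` is a right descent of `w`, which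
reduces to rank two, where the coefficients are values of Chebyshev polynomials.
If `w e i = e j`, invariance of the symmetrized form gives `w s i w⁻¹ = s j`, so `s i` and `s j`
are conjugate in the Coxeter group. Since `m k l` is even for `k` and `l` in different components
of the skeleton, the sign character equal to `-1` exactly on the simple reflections of one
component is well defined, and it separates `s i` from `s j` unless `i` and `j` lie in the same
component. -/

namespace Polynomial.Chebyshev

theorem S_eval_sub_one_nonneg_and_le {R : Type*} [CommRing R] [LinearOrder R]
    [IsStrictOrderedRing R] {t : R} (ht : 2 ≤ t) (n : ℕ) :
    0 ≤ (S R (n - 1)).eval t ∧ (S R (n - 1)).eval t ≤ (S R n).eval t := by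
  induction n with
  | zero => simp
  | succ n ih =>
    have hrec : (S R (n + 1)).eval t = t * (S R n).eval t - (S R (n - 1)).eval t := by
      simp [S_add_one]
    push_cast
    rw [add_sub_cancel_right, hrec]
    constructor <;> nlinarith

end Polynomial.Chebyshev

namespace CoxeterSystem

theorem eq_alternatingWord_of_isChain_ne {B : Type*} {i j : B} {ω : List B}
    (hmem : ∀ k ∈ ω, k = i ∨ k = j) (hω : ω.IsChain (· ≠ ·)) (hlast : ω.getLast? ≠ some i) :
    ω = alternatingWord i j ω.length := by
  induction ω using List.reverseRecOn generalizing i j with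
  | nil => rfl
  | append_singleton t a ih =>
    obtain rfl : a = j := (hmem a (by simp)).resolve_left fun h => by simp [h] at hlast
    obtain ⟨ht, -, hta⟩ := List.isChain_append.mp hω
    have := ih (fun k hk => (hmem k (by simp [hk])).symm) ht fun h => hta a h a (by simp) rfl
    rw [List.length_append, List.length_singleton, alternatingWord_succ, ← this,
      List.concat_eq_append]

variable {B W : Type*} [Group W] {M : CoxeterMatrix B} (cs : CoxeterSystem M W)

local prefix:100 "π" => cs.wordProd
local prefix:100 "ℓ" => cs.length

theorem IsReduced.isChain_ne {ω : List B} (hω : cs.IsReduced ω) : ω.IsChain (· ≠ ·) := by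
  induction ω with
  | nil => exact List.isChain_nil
  | cons a t ih =>
    cases t with
    | nil => exact List.isChain_singleton a
    | cons b t =>
      refine List.isChain_cons_cons.mpr ⟨fun hab => ?_, ih (hω.drop 1)⟩
      have hπ : π (a :: b :: t) = π t := by
        rw [hab, wordProd_cons, wordProd_cons, simple_mul_simple_cancel_left]
      have := cs.length_wordProd_le t
      have := hω.eq
      simp only [hπ, List.length_cons] at this
      omega

theorem exists_eq_mul_wordProd_pair (w : W) (i j : B) :
    ∃ v ω, (∀ k ∈ ω, k = i ∨ k = j) ∧ w = v * π ω ∧ ℓ w = ℓ v + ω.length ∧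
      ¬cs.IsRightDescent v i ∧ ¬cs.IsRightDescent v j := by
  induction hw : ℓ w using Nat.strong_induction_on generalizing w with
  | _ r ih =>
  by_cases hdesc : ∃ k, (k = i ∨ k = j) ∧ cs.IsRightDescent w k
  · obtain ⟨k, hk, hwk⟩ := hdesc
    have hlen : ℓ (w * cs.simple k) + 1 = ℓ w :=
      (cs.length_mul_simple w k).resolve_left fun h => by
        unfold IsRightDescent at hwk; omega
    obtain ⟨v, ω, hmem, hv, hlenv, hvi, hvj⟩ := ih _ (by omega) (w * cs.simple k) rfl
    refine ⟨v, ω ++ [k], fun l hl => ?_, ?_, ?_, hvi, hvj⟩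
    · rcases List.mem_append.mp hl with hl | hl
      · exact hmem l hl
      · rwa [List.mem_singleton.mp hl]
    · rw [wordProd_append, ← mul_assoc, ← hv, wordProd_singleton, simple_mul_simple_cancel_right]
    · simp only [List.length_append, List.length_singleton]; omega
  · push Not at hdesc
    exact ⟨w, [], by simp, by simp, by simp [hw], hdesc i (.inl rfl), hdesc j (.inr rfl)⟩

/-- The factor `π ω` of `exists_eq_mul_wordProd_pair` is reduced and does not end in `i`, so it
alternates, and the braid relation bounds its length. -/
theorem exists_eq_mul_alternatingWord {w : W} {i j : B} (hi : ¬cs.IsRightDescent w i)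
    (hj : cs.IsRightDescent w j) :
    ∃ v q, w = v * π (alternatingWord i j q) ∧ ℓ v < ℓ w ∧
      ¬cs.IsRightDescent v i ∧ ¬cs.IsRightDescent v j ∧ (M i j = 0 ∨ q < M i j) := by
  obtain ⟨v, ω, hmem, hw, hlen, hvi, hvj⟩ := cs.exists_eq_mul_wordProd_pair w i j
  have not_ends_with_i (ω' : List B) (h : π ω = π ω' * cs.simple i) : ω.length ≤ ω'.length := by
    by_contra! hlt
    refine hi (lt_of_le_of_lt (b := ℓ v + ω'.length) ?_ (by omega))
    rw [hw, mul_assoc, h, simple_mul_simple_cancel_right]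
    exact (cs.length_mul_le _ _).trans (by grw [cs.length_wordProd_le])
  have hred : cs.IsReduced ω := by
    have := cs.length_mul_le v (π ω)
    have := cs.length_wordProd_le ω
    unfold IsReduced
    rw [← hw] at *
    omega
  have hlast : ω.getLast? ≠ some i := fun h => by
    obtain ⟨ω', rfl⟩ := List.getLast?_eq_some_iff.mp h
    simpa using not_ends_with_i ω' (by rw [wordProd_append, wordProd_singleton])
  have hω := eq_alternatingWord_of_isChain_ne hmem hred.isChain_ne hlast
  refine ⟨v, ω.length, hω ▸ hw, ?_, hvi, hvj, ?_⟩
  · refine lt_of_le_of_ne (by omega) fun hv => hvj ?_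
    rw [List.eq_nil_of_length_eq_zero (by omega : ω.length = 0), wordProd_nil, mul_one] at hw
    exact hw ▸ hj
  · by_contra! h
    rcases h.2.eq_or_lt with heq | hlt
    · obtain ⟨m, hm⟩ := Nat.exists_eq_succ_of_ne_zero h.1
      have hbraid : π ω = π (alternatingWord i j m) * cs.simple i := by
        rw [hω, ← heq, cs.wordProd_braidWord_eq, braidWord, M.symmetric, hm,
          alternatingWord_succ, wordProd_concat]
      have := not_ends_with_i _ hbraid
      simp only [length_alternatingWord] at this
      omega
    · exact cs.not_isReduced_alternatingWord i j h.1 hlt (hω ▸ hred)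

theorem mem_of_mul_simple_mul_inv_eq {J : Set B} (hJ : ∀ k ∈ J, ∀ l ∉ J, Even (M k l))
    {w : W} {i j : B} (h : w * cs.simple i * w⁻¹ = cs.simple j) (hi : i ∈ J) : j ∈ J := by
  classical
  have hlift : M.IsLiftable fun k => if k ∈ J then (-1 : ℤˣ) else 1 := by
    intro k l
    by_cases hk : k ∈ J <;> by_cases hl : l ∈ J
    · simp [hk, hl]
    · simp [hk, hl, (hJ k hk l hl).neg_one_pow]
    · simp [hk, hl, M.symmetric k l ▸ (hJ l hl k hk).neg_one_pow]
    · simp [hk, hl]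
  have hχ := congrArg (cs.lift ⟨_, hlift⟩) h
  by_contra hj
  simp [hi, hj] at hχ

end CoxeterSystem

open Module Polynomial.Chebyshev

variable {ι : Type} [DecidableEq ι]

/-- `0` encodes `m = ∞`, as in `CoxeterMatrix`. -/
def coxeterExponent (p : ℤ) : ℕ :=
  if p = 0 then 2 else if p = 1 then 3 else if p = 2 then 4 else if p = 3 then 6 else 0

lemma coxeterExponent_ne_one (p : ℤ) : coxeterExponent p ≠ 1 := by
  unfold coxeterExponent; split_ifs <;> simp

lemma even_coxeterExponent {p : ℤ} (hp : p ≠ 1) : Even (coxeterExponent p) := by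
  unfold coxeterExponent; split_ifs <;> simp_all <;> decide

def cartanCoxeterMatrix (A : Matrix ι ι ℤ) : CoxeterMatrix ι where
  M := Matrix.of fun i j => if i = j then 1 else coxeterExponent (A i j * A j i)
  isSymm := Matrix.IsSymm.ext fun i j => by
    by_cases h : i = j <;> simp [h, eq_comm, mul_comm]
  diagonal i := by simp
  off_diagonal i j h := by simp [h, coxeterExponent_ne_one]

lemma cartanCoxeterMatrix_of_ne {A : Matrix ι ι ℤ} {i j : ι} (hij : i ≠ j) :
    cartanCoxeterMatrix A i j = coxeterExponent (A i j * A j i) := if_neg hij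

/-- These are the coefficients in `Module.reflection_mul_reflection_pow_apply_self` and its
odd-length variant for an alternating word of length `q` in `s i, s j`, with `p = A i j * A j i`. -/
lemma S_eval_nonneg_of_lt_coxeterExponent {p : ℤ} (hp : 0 ≤ p) {q : ℕ}
    (hq : coxeterExponent p = 0 ∨ q < coxeterExponent p) :
    0 ≤ (S ℚ (q / 2 : ℕ)).eval (p - 2 : ℚ) + (S ℚ ((q / 2 : ℕ) - 1)).eval (p - 2 : ℚ) ∧
      0 ≤ (S ℚ ((q / 2 : ℕ) - 1)).eval (p - 2 : ℚ) ∧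
      (Odd q → 0 ≤ (S ℚ (q / 2 : ℕ)).eval (p - 2 : ℚ)) := by
  rcases le_or_gt 4 p with hp4 | hp3
  · have ht : (2 : ℚ) ≤ p - 2 := by
      have : (4 : ℚ) ≤ p := by exact_mod_cast hp4
      linarith
    obtain ⟨h1, h2⟩ := S_eval_sub_one_nonneg_and_le ht (q / 2)
    exact ⟨by linarith, h1, fun _ => by linarith⟩
  · interval_cases p <;> norm_num [coxeterExponent] at hq <;> interval_cases q <;>
      norm_num [S_one, S_two]

variable [Fintype ι]

noncomputable def cartanCoroot (A : Matrix ι ι ℤ) (i : ι) : Dual ℚ (ι → ℚ) :=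
  (LinearMap.proj i).comp (A.map (Int.cast : ℤ → ℚ)).mulVecLin

@[simp]
lemma cartanCoroot_single (A : Matrix ι ι ℤ) (i l : ι) :
    cartanCoroot A i (Pi.single l 1) = A i l := by
  simp [cartanCoroot]

lemma cartanCoroot_single_self {A : Matrix ι ι ℤ} (hA : ∀ i, A i i = 2) (i : ι) :
    cartanCoroot A i (Pi.single i 1) = 2 := by
  simp [hA]

noncomputable def simpleReflection {A : Matrix ι ι ℤ} (hA : ∀ i, A i i = 2) (i : ι) :
    (ι → ℚ) ≃ₗ[ℚ] (ι → ℚ) :=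
  reflection (cartanCoroot_single_self hA i)

lemma simpleReflection_apply {A : Matrix ι ι ℤ} (hA : ∀ i, A i i = 2) (i : ι) (v : ι → ℚ) :
    simpleReflection hA i v = v - cartanCoroot A i v • Pi.single i 1 :=
  reflection_apply v _

lemma simpleReflection_single {A : Matrix ι ι ℤ} (hA : ∀ i, A i i = 2) (i l : ι) :
    simpleReflection hA i (Pi.single l 1) = Pi.single l 1 - (A i l : ℚ) • Pi.single i 1 := by
  rw [simpleReflection_apply, cartanCoroot_single]

lemma simpleReflection_mul_self {A : Matrix ι ι ℤ} (hA : ∀ i, A i i = 2) (i : ι) :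
    simpleReflection hA i * simpleReflection hA i = 1 :=
  LinearEquiv.ext (involutive_reflection _)

theorem simpleReflection_isLiftable {A : Matrix ι ι ℤ} (hA : IsGCM A) :
    (cartanCoxeterMatrix A).IsLiftable (simpleReflection hA.1) := by
  intro i j
  rcases eq_or_ne i j with rfl | hij
  · rw [CoxeterMatrix.diagonal, pow_one, simpleReflection_mul_self]
  rw [cartanCoxeterMatrix_of_ne hij]
  apply LinearEquiv.toLinearMap_injective
  rw [simpleReflection, simpleReflection, reflection_mul_reflection_pow]
  simp only [cartanCoroot_single, ← Int.cast_mul]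
  unfold coxeterExponent
  -- for `m = 3, 4, 6` both Chebyshev coefficients vanish; for `m = 2` the two terms cancel
  split_ifs with h0 h1 h2 h3
  · obtain ⟨hij0, hji0⟩ : A i j = 0 ∧ A j i = 0 := by
      rcases mul_eq_zero.mp h0 with h | h
      · exact ⟨h, hA.2.2 i j h⟩
      · exact ⟨hA.2.2 j i h, h⟩
    refine LinearMap.ext fun v => ?_
    simp [hij0, hji0, S_one]
    module
  · norm_num [h1, S_one, S_two]
  · norm_num [h2, S_one, S_two]
  · norm_num [h3, S_one, S_two]
  · simp

noncomputable def reflectionRep {A : Matrix ι ι ℤ} (hA : IsGCM A) :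
    (cartanCoxeterMatrix A).Group →* ((ι → ℚ) ≃ₗ[ℚ] (ι → ℚ)) :=
  (cartanCoxeterMatrix A).toCoxeterSystem.lift ⟨_, simpleReflection_isLiftable hA⟩

@[simp]
lemma reflectionRep_simple {A : Matrix ι ι ℤ} (hA : IsGCM A) (i : ι) :
    reflectionRep hA ((cartanCoxeterMatrix A).toCoxeterSystem.simple i) =
      simpleReflection hA.1 i :=
  CoxeterSystem.lift_apply_simple _ _ i

theorem range_reflectionRep {A : Matrix ι ι ℤ} (hA : IsGCM A) :
    (reflectionRep hA).range = Subgroup.closure (Set.range (simpleReflection hA.1)) := by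
  rw [MonoidHom.range_eq_map,
    ← (cartanCoxeterMatrix A).toCoxeterSystem.subgroup_closure_range_simple,
    MonoidHom.map_closure, ← Set.range_comp]
  rfl

theorem exists_reflectionRep_alternatingWord_single {A : Matrix ι ι ℤ} (hA : IsGCM A) {i j : ι}
    (hij : i ≠ j) {q : ℕ}
    (hq : cartanCoxeterMatrix A i j = 0 ∨ q < cartanCoxeterMatrix A i j) :
    ∃ a b : ℚ, 0 ≤ a ∧ 0 ≤ b ∧
      reflectionRep hA ((cartanCoxeterMatrix A).toCoxeterSystem.wordProd
        (CoxeterSystem.alternatingWord i j q)) (Pi.single i 1) =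
        a • Pi.single i 1 + b • Pi.single j 1 := by
  have hp : 0 ≤ A i j * A j i :=
    mul_nonneg_of_nonpos_of_nonpos (hA.2.1 i j hij) (hA.2.1 j i hij.symm)
  rw [cartanCoxeterMatrix_of_ne hij] at hq
  obtain ⟨hsum, hprev, hlast⟩ := S_eval_nonneg_of_lt_coxeterExponent hp hq
  push_cast at hsum hprev hlast
  have hji : (0 : ℚ) ≤ -A j i := by exact_mod_cast neg_nonneg.mpr (hA.2.1 j i hij.symm)
  rw [CoxeterSystem.prod_alternatingWord_eq_mul_pow]
  split_ifs with hq_even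
  · simp only [one_mul, map_pow, map_mul, reflectionRep_simple, simpleReflection]
    rw [reflection_mul_reflection_pow_apply_self]
    simp only [cartanCoroot_single]
    exact ⟨_, _, hsum, mul_nonneg hprev hji, rfl⟩
  · simp only [map_pow, map_mul, reflectionRep_simple, simpleReflection]
    rw [reflection_mul_reflection_mul_reflection_pow_apply_self]
    simp only [cartanCoroot_single]
    exact ⟨_, _, hsum, mul_nonneg (hlast (Nat.not_even_iff_odd.mp hq_even)) hji, rfl⟩

theorem reflectionRep_single_nonneg {A : Matrix ι ι ℤ} (hA : IsGCM A)
    {w : (cartanCoxeterMatrix A).Group} {i : ι}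
    (hi : ¬(cartanCoxeterMatrix A).toCoxeterSystem.IsRightDescent w i) (k : ι) :
    0 ≤ reflectionRep hA w (Pi.single i 1) k := by
  set cs := (cartanCoxeterMatrix A).toCoxeterSystem
  induction hw : cs.length w using Nat.strong_induction_on generalizing w i with
  | _ r ih =>
  rcases eq_or_ne w 1 with rfl | hw1
  · simp only [map_one, LinearEquiv.coe_one, id_eq, Pi.single_apply]
    split_ifs <;> norm_num
  obtain ⟨j, hj⟩ := cs.exists_rightDescent_of_ne_one hw1
  have hij : i ≠ j := by rintro rfl; exact hi hj
  obtain ⟨v, q, rfl, hlen, hvi, hvj, hq⟩ := cs.exists_eq_mul_alternatingWord hi hj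
  obtain ⟨a, b, ha, hb, hab⟩ := exists_reflectionRep_alternatingWord_single hA hij hq
  rw [map_mul, LinearEquiv.mul_apply, hab, map_add, map_smul, map_smul]
  exact add_nonneg (mul_nonneg ha (ih _ (hw ▸ hlen) hvi rfl))
    (mul_nonneg hb (ih _ (hw ▸ hlen) hvj rfl))

theorem reflectionRep_injective {A : Matrix ι ι ℤ} (hA : IsGCM A) :
    Function.Injective (reflectionRep hA) := by
  set cs := (cartanCoxeterMatrix A).toCoxeterSystem
  refine (injective_iff_map_eq_one _).mpr fun w hw => ?_
  by_contra hw1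
  obtain ⟨j, hj⟩ := cs.exists_rightDescent_of_ne_one hw1
  have hpos := reflectionRep_single_nonneg hA
    (cs.isRightDescent_iff_not_isRightDescent_mul.mp hj) j
  rw [map_mul, hw, one_mul, reflectionRep_simple, simpleReflection, reflection_apply_self] at hpos
  norm_num at hpos

noncomputable def symmetrizedForm (A : Matrix ι ι ℤ) (d : ι → ℚ) :
    LinearMap.BilinForm ℚ (ι → ℚ) :=
  Matrix.toBilin' (Matrix.diagonal d * A.map (Int.cast : ℤ → ℚ))

lemma symmetrizedForm_single_left (A : Matrix ι ι ℤ) (d : ι → ℚ) (k : ι) (v : ι → ℚ) :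
    symmetrizedForm A d (Pi.single k 1) v = d k * cartanCoroot A k v := by
  simp [symmetrizedForm, Matrix.toBilin'_apply', cartanCoroot, ← Matrix.mulVec_mulVec,
    Matrix.mulVec_diagonal]

lemma symmetrizedForm_single_right {A : Matrix ι ι ℤ} {d : ι → ℚ}
    (hd : ∀ i j, d i * A i j = d j * A j i) (u : ι → ℚ) (k : ι) :
    symmetrizedForm A d u (Pi.single k 1) = d k * cartanCoroot A k u := by
  rw [symmetrizedForm, Matrix.toBilin'_apply', Matrix.mulVec_single_one]
  simp only [cartanCoroot, LinearMap.coe_comp, Function.comp_apply, Matrix.mulVecLin_apply,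
    LinearMap.coe_proj, Function.eval, dotProduct, Matrix.mulVec, Finset.mul_sum]
  refine Finset.sum_congr rfl fun l _ => ?_
  simp [Matrix.diagonal_mul, hd]
  ring

lemma symmetrizedForm_simpleReflection {A : Matrix ι ι ℤ} (hA : ∀ i, A i i = 2) {d : ι → ℚ}
    (hd : ∀ i j, d i * A i j = d j * A j i) (i : ι) (u v : ι → ℚ) :
    symmetrizedForm A d (simpleReflection hA i u) (simpleReflection hA i v) =
      symmetrizedForm A d u v := by
  simp only [simpleReflection_apply, map_sub, map_smul, LinearMap.sub_apply, LinearMap.smul_apply,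
    symmetrizedForm_single_left, symmetrizedForm_single_right hd, cartanCoroot_single_self hA,
    smul_eq_mul]
  ring

lemma symmetrizedForm_reflectionRep {A : Matrix ι ι ℤ} (hA : IsGCM A) {d : ι → ℚ}
    (hd : ∀ i j, d i * A i j = d j * A j i) (w : (cartanCoxeterMatrix A).Group)
    (u v : ι → ℚ) :
    symmetrizedForm A d (reflectionRep hA w u) (reflectionRep hA w v) =
      symmetrizedForm A d u v := by
  induction w using (cartanCoxeterMatrix A).toCoxeterSystem.simple_induction_left
    generalizing u v with
  | one => rfl
  | mul_simple_left w i ih =>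
    rw [map_mul, LinearEquiv.mul_apply, LinearEquiv.mul_apply, reflectionRep_simple,
      symmetrizedForm_simpleReflection hA.1 hd, ih]

theorem simpleReflection_conj {A : Matrix ι ι ℤ} (hA : ∀ i, A i i = 2) {d : ι → ℚ} {i j : ι}
    (hdi : d i ≠ 0) {g : (ι → ℚ) ≃ₗ[ℚ] (ι → ℚ)}
    (hg : ∀ u v, symmetrizedForm A d (g u) (g v) = symmetrizedForm A d u v)
    (hgij : g (Pi.single i 1) = Pi.single j 1) :
    g * simpleReflection hA i * g⁻¹ = simpleReflection hA j := by
  have hdij : d i = d j := by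
    have := hg (Pi.single i 1) (Pi.single i 1)
    simp only [hgij, symmetrizedForm_single_left, cartanCoroot_single_self hA] at this
    linarith
  have hcoroot (v : ι → ℚ) : cartanCoroot A i (g.symm v) = cartanCoroot A j v := by
    have := hg (Pi.single i 1) (g.symm v)
    rw [hgij, LinearEquiv.apply_symm_apply, symmetrizedForm_single_left,
      symmetrizedForm_single_left, ← hdij] at this
    exact (mul_left_cancel₀ hdi this).symm
  ext v : 1
  simp [simpleReflection_apply, hcoroot, hgij]

theorem mul_simple_mul_inv_eq_of_reflectionRep_single {A : Matrix ι ι ℤ} (hA : IsGCM A)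
    (hsym : IsSymmetrizable A) {w : (cartanCoxeterMatrix A).Group} {i j : ι}
    (h : reflectionRep hA w (Pi.single i 1) = Pi.single j 1) :
    w * (cartanCoxeterMatrix A).toCoxeterSystem.simple i * w⁻¹ =
      (cartanCoxeterMatrix A).toCoxeterSystem.simple j := by
  obtain ⟨d, hd0, hd⟩ := hsym
  apply reflectionRep_injective hA
  rw [map_mul, map_mul, map_inv, reflectionRep_simple, reflectionRep_simple]
  exact simpleReflection_conj hA.1 (hd0 i) (symmetrizedForm_reflectionRep hA hd w) h

variable {n : ℕ}

theorem weylGroup_eq_range_reflectionRep {A : Matrix (Fin n) (Fin n) ℤ} (hA : IsGCM A) :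
    weylGroup A = (reflectionRep hA).range := by
  rw [range_reflectionRep, weylGroup]
  congr 1
  ext w
  constructor
  · rintro ⟨i, hi⟩
    exact ⟨i, (Pi.basisFun ℚ (Fin n)).ext' fun j => by simp [hi, simpleReflection_single]⟩
  · rintro ⟨i, rfl⟩
    exact ⟨i, simpleReflection_single hA.1 i⟩

lemma even_cartanCoxeterMatrix_of_not_adj {A : Matrix (Fin n) (Fin n) ℤ} (hA : IsGCM A)
    {k l : Fin n} (hkl : k ≠ l) (hadj : ¬(skeleton A).Adj k l) :
    Even (cartanCoxeterMatrix A k l) := by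
  rw [cartanCoxeterMatrix_of_ne hkl]
  refine even_coxeterExponent fun h => hadj ⟨hkl, ?_⟩
  have := hA.2.1 k l hkl
  rcases Int.mul_eq_one_iff_eq_one_or_neg_one.mp h with h | h <;> omega

theorem skeleton_reachable_of_mem_weylOrbit {A : Matrix (Fin n) (Fin n) ℤ} (hA : IsGCM A)
    (hsym : IsSymmetrizable A) {i j : Fin n} {v : Fin n → ℚ} (hi : v ∈ weylOrbit A i)
    (hj : v ∈ weylOrbit A j) : (skeleton A).Reachable i j := by
  obtain ⟨_, hg, rfl⟩ := hi
  obtain ⟨_, hg', hgg'⟩ := hj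
  rw [weylGroup_eq_range_reflectionRep hA] at hg hg'
  obtain ⟨w, rfl⟩ := hg
  obtain ⟨w', rfl⟩ := hg'
  have h : reflectionRep hA (w'⁻¹ * w) (Pi.single i 1) = Pi.single j 1 := by
    rw [map_mul, map_inv, LinearEquiv.mul_apply, ← hgg']
    exact (reflectionRep hA w').symm_apply_apply _
  refine (cartanCoxeterMatrix A).toCoxeterSystem.mem_of_mul_simple_mul_inv_eq
    (J := {k | (skeleton A).Reachable i k}) (fun k hk l hl => ?_)
    (mul_simple_mul_inv_eq_of_reflectionRep_single hA hsym h) (SimpleGraph.Reachable.refl i)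
  exact even_cartanCoxeterMatrix_of_not_adj hA (by rintro rfl; exact hl hk)
    fun hadj => hl (hk.trans hadj.reachable)

/-- The set of real roots `Φ = ⋃ i, W·e i` decomposes as the disjoint union, over the
connected components `J` of the simply laced skeleton, of the sets `⋃_{j ∈ J} W·e j`. -/
theorem real_roots_orbit_decomposition {n : ℕ} (A : Matrix (Fin n) (Fin n) ℤ)
    (hA : IsGCM A) (hsym : IsSymmetrizable A) :
    (Set.univ : Set (skeleton A).ConnectedComponent).PairwiseDisjoint
      (fun c => ⋃ i ∈ c.supp, weylOrbit A i) ∧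
    (⋃ c : (skeleton A).ConnectedComponent, ⋃ i ∈ c.supp, weylOrbit A i) =
      ⋃ i, weylOrbit A i := by
  refine ⟨fun c _ c' _ hcc => Set.disjoint_left.mpr fun v hv hv' => hcc ?_, ?_⟩
  · simp only [Set.mem_iUnion] at hv hv'
    obtain ⟨i, rfl, hvi⟩ := hv
    obtain ⟨j, rfl, hvj⟩ := hv'
    exact SimpleGraph.ConnectedComponent.sound (skeleton_reachable_of_mem_weylOrbit hA hsym hvi hvj)
  · ext v
    simp only [Set.mem_iUnion]
    exact ⟨fun ⟨_, i, _, h⟩ => ⟨i, h⟩, fun ⟨i, h⟩ => ⟨_, i, rfl, h⟩⟩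
end
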